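/- Assume d ≥ 1 and 2 + 4/d < p + 1 < 2*. For every η ∈ (0, Ñ₂) and every α > 0, there exists f ∈ PW₊ such that Ñ₂(f) = η and ‖f‖_{L²} = α. -/

import Mathlib

open MeasureTheory Filter Set
open scoped ENNReal Topology

noncomputable section

abbrev Euc (d : ℕ) := EuclideanSpace ℝ (Fin d)

def gradSq (d : ℕ) (f : Euc d → ℂ) : ℝ := ∫ x, ‖fderiv ℝ f x‖ ^ 2

def ppow (d : ℕ) (q : ℝ) (f : Euc d → ℂ) : ℝ := ∫ x, ‖f x‖ ^ q

def l2norm (d : ℕ) (f : Euc d → ℂ) : ℝ := Real.sqrt (ppow d 2 f)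

def InH1 (d : ℕ) (f : Euc d → ℂ) : Prop :=
  MemLp f 2 (volume : Measure (Euc d)) ∧ Differentiable ℝ f ∧
    Integrable (fun x => ‖fderiv ℝ f x‖ ^ 2) (volume : Measure (Euc d))

def Hfun (d : ℕ) (p : ℝ) (f : Euc d → ℂ) : ℝ :=
  gradSq d f - (2 / (p + 1)) * ppow d (p + 1) f

def Kfun (d : ℕ) (p : ℝ) (f : Euc d → ℂ) : ℝ :=
  gradSq d f - ((d : ℝ) * (p - 1) / (2 * (p + 1))) * ppow d (p + 1) f

def Adm (d : ℕ) (p : ℝ) (f : Euc d → ℂ) : Prop :=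
  InH1 d f ∧ MemLp f (ENNReal.ofReal (p + 1)) (volume : Measure (Euc d)) ∧
    ¬ (f =ᵐ[(volume : Measure (Euc d))] (0 : Euc d → ℂ))

def N2fun (d : ℕ) (p : ℝ) (f : Euc d → ℂ) : ℝ :=
  l2norm d f ^ (p + 1 - (d : ℝ) * (p - 1) / 2) *
    Real.sqrt (gradSq d f) ^ ((d : ℝ) * (p - 1) / 2 - 2)

def N2val (d : ℕ) (p : ℝ) : ℝ :=
  sInf {r : ℝ | ∃ f : Euc d → ℂ, Adm d p f ∧ Kfun d p f ≤ 0 ∧ r = N2fun d p f}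

/-- `Ñ₂(f) = ‖f‖_{L²}^{p+1−d(p−1)/2} √(ℋ(f))^{d(p−1)/2−2}`. -/
def tildeN2fun (d : ℕ) (p : ℝ) (f : Euc d → ℂ) : ℝ :=
  l2norm d f ^ (p + 1 - (d : ℝ) * (p - 1) / 2) *
    Real.sqrt (Hfun d p f) ^ ((d : ℝ) * (p - 1) / 2 - 2)

/-- `Ñ₂ = √((d(p−1)−4)/(d(p−1)))^{d(p−1)/2−2} N₂`. -/
def tildeN2val (d : ℕ) (p : ℝ) : ℝ :=
  Real.sqrt (((d : ℝ) * (p - 1) - 4) / ((d : ℝ) * (p - 1))) ^ ((d : ℝ) * (p - 1) / 2 - 2) *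
    N2val d p

/-- `PW₊ = { f ∈ H¹ : 𝒦(f) > 0, Ñ₂(f) < Ñ₂ }` (the alternative expression). -/
def PWplusT (d : ℕ) (p : ℝ) : Set (Euc d → ℂ) :=
  {f | Adm d p f ∧ 0 < Kfun d p f ∧ tildeN2fun d p f < tildeN2val d p}

/-!
Any nonzero compactly supported `C¹` function `g` can play the role of the ground state. With
`A = p + 1 - d(p-1)/2` and `B = d(p-1)/2 - 2`, along the path `s ↦ s g` one has
`Ñ₂(s g) = s^(p-1) ‖g‖₂^A (‖∇g‖₂² - 2/(p+1) s^(p-1) ‖g‖_{p+1}^{p+1})^(B/2)`,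
a continuous function of `s ≥ 0` vanishing at `0`. Where the path meets `𝒦 = 0`, at `s₁` say,
`ℋ = (1 - 4/(d(p-1))) ‖∇(s₁ g)‖₂²`, so `Ñ₂(s₁ g) = (1 - 4/(d(p-1)))^(B/2) 𝒩₂(s₁ g) ≥ Ñ₂`, and
the intermediate value theorem gives `s ∈ (0, s₁)` with `Ñ₂(s g) = η` and `𝒦(s g) > 0`.
The dilation `f_λ(x) = λ^(2/(p-1)) f(λx)` then preserves `Ñ₂`, multiplies `𝒦` by a positive
factor and `‖f‖₂` by `λ^(2/(p-1) - d/2)`, a nonconstant power of `λ` since `d(p-1) > 4`.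
-/

open Real

variable {d : ℕ}

def dilate (p l : ℝ) (f : Euc d → ℂ) : Euc d → ℂ :=
  l ^ (2 / (p - 1)) • fun x => f (l • x)

section Scaling

variable {p s l : ℝ}

lemma gradSq_nonneg (f : Euc d → ℂ) : 0 ≤ gradSq d f :=
  integral_nonneg fun _ => by positivity

lemma ppow_smul (hs : 0 ≤ s) (q : ℝ) (f : Euc d → ℂ) :
    ppow d q (s • f) = s ^ q * ppow d q f := by
  simp only [ppow, Pi.smul_apply, norm_smul, norm_of_nonneg hs, mul_rpow hs (norm_nonneg _),
    integral_const_mul]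

lemma ppow_comp_smul (hl : 0 < l) (q : ℝ) (f : Euc d → ℂ) :
    ppow d q (fun x => f (l • x)) = (l ^ d)⁻¹ * ppow d q f := by
  rw [ppow, Measure.integral_comp_smul volume (fun x => ‖f x‖ ^ q), finrank_euclideanSpace_fin,
    abs_of_pos (by positivity), smul_eq_mul, ppow]

lemma gradSq_smul (s : ℝ) (f : Euc d → ℂ) : gradSq d (s • f) = s ^ 2 * gradSq d f := by
  simp only [gradSq, fderiv_const_smul_field, Pi.smul_apply, norm_smul, mul_pow, norm_eq_abs,
    sq_abs, integral_const_mul]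

lemma gradSq_comp_smul (hl : 0 < l) (f : Euc d → ℂ) :
    gradSq d (fun x => f (l • x)) = l ^ 2 * ((l ^ d)⁻¹ * gradSq d f) := by
  simp only [gradSq, fderiv_comp_smul, norm_smul, mul_pow, norm_eq_abs, sq_abs,
    integral_const_mul]
  rw [Measure.integral_comp_smul volume (fun x => ‖fderiv ℝ f x‖ ^ 2),
    finrank_euclideanSpace_fin, abs_of_pos (by positivity), smul_eq_mul]

lemma ppow_dilate (hl : 0 < l) (q : ℝ) (f : Euc d → ℂ) :
    ppow d q (dilate p l f) = l ^ (2 * q / (p - 1) - d) * ppow d q f := by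
  rw [dilate, ppow_smul (by positivity), ppow_comp_smul hl, ← rpow_mul hl.le, ← rpow_natCast,
    ← rpow_neg hl.le, ← mul_assoc, ← rpow_add hl]
  ring_nf

lemma gradSq_dilate (hl : 0 < l) (f : Euc d → ℂ) :
    gradSq d (dilate p l f) = l ^ (4 / (p - 1) + 2 - d) * gradSq d f := by
  rw [dilate, gradSq_smul, gradSq_comp_smul hl, ← rpow_natCast l d, ← rpow_neg hl.le,
    ← rpow_two, ← rpow_two, ← rpow_mul hl.le,
    show 4 / (p - 1) + 2 - (d : ℝ) = 2 / (p - 1) * 2 + (2 + -d) by ring, rpow_add hl, rpow_add hl]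
  ring

lemma ppow_add_one_dilate (hp : p ≠ 1) (hl : 0 < l) (f : Euc d → ℂ) :
    ppow d (p + 1) (dilate p l f) = l ^ (4 / (p - 1) + 2 - d) * ppow d (p + 1) f := by
  rw [ppow_dilate hl]
  congr 2
  field_simp [sub_ne_zero.2 hp]
  ring

lemma Hfun_dilate (hp : p ≠ 1) (hl : 0 < l) (f : Euc d → ℂ) :
    Hfun d p (dilate p l f) = l ^ (4 / (p - 1) + 2 - d) * Hfun d p f := by
  rw [Hfun, Hfun, gradSq_dilate hl, ppow_add_one_dilate hp hl]
  ring

lemma Kfun_dilate (hp : p ≠ 1) (hl : 0 < l) (f : Euc d → ℂ) :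
    Kfun d p (dilate p l f) = l ^ (4 / (p - 1) + 2 - d) * Kfun d p f := by
  rw [Kfun, Kfun, gradSq_dilate hl, ppow_add_one_dilate hp hl]
  ring

lemma l2norm_nonneg (f : Euc d → ℂ) : 0 ≤ l2norm d f :=
  sqrt_nonneg _

lemma l2norm_dilate (hl : 0 < l) (f : Euc d → ℂ) :
    l2norm d (dilate p l f) = l ^ (2 / (p - 1) - d / 2) * l2norm d f := by
  rw [l2norm, ppow_dilate hl, sqrt_mul (by positivity), sqrt_eq_rpow, ← rpow_mul hl.le, l2norm]
  ring_nf

lemma tildeN2fun_dilate (hp : p ≠ 1) (hl : 0 < l) (f : Euc d → ℂ) :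
    tildeN2fun d p (dilate p l f) = tildeN2fun d p f := by
  have hexp : (2 / (p - 1) - d / 2) * (p + 1 - d * (p - 1) / 2)
      + (4 / (p - 1) + 2 - d) * (1 / 2) * (d * (p - 1) / 2 - 2) = 0 := by
    field_simp [sub_ne_zero.2 hp]; ring
  rw [tildeN2fun, tildeN2fun, l2norm_dilate hl, Hfun_dilate hp hl, sqrt_mul (by positivity),
    sqrt_eq_rpow (l ^ _), ← rpow_mul hl.le, mul_rpow (by positivity) (l2norm_nonneg f),
    mul_rpow (by positivity) (sqrt_nonneg _), ← rpow_mul hl.le, ← rpow_mul hl.le,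
    mul_mul_mul_comm, ← rpow_add hl, hexp, rpow_zero, one_mul]

lemma l2norm_smul (hs : 0 ≤ s) (f : Euc d → ℂ) : l2norm d (s • f) = s * l2norm d f := by
  rw [l2norm, ppow_smul hs, rpow_two, sqrt_mul (sq_nonneg s), sqrt_sq hs, l2norm]

lemma rpow_add_one_eq_sq_mul (hs : 0 < s) (p : ℝ) : s ^ (p + 1) = s ^ 2 * s ^ (p - 1) := by
  rw [← rpow_two, ← rpow_add hs]
  ring_nf

lemma Hfun_smul (hs : 0 < s) (f : Euc d → ℂ) :
    Hfun d p (s • f) = s ^ 2 * (gradSq d f - 2 / (p + 1) * s ^ (p - 1) * ppow d (p + 1) f) := by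
  rw [Hfun, gradSq_smul, ppow_smul hs.le, rpow_add_one_eq_sq_mul hs]
  ring

lemma Kfun_smul (hs : 0 < s) (f : Euc d → ℂ) :
    Kfun d p (s • f) = s ^ 2 *
      (gradSq d f - d * (p - 1) / (2 * (p + 1)) * s ^ (p - 1) * ppow d (p + 1) f) := by
  rw [Kfun, gradSq_smul, ppow_smul hs.le, rpow_add_one_eq_sq_mul hs]
  ring

lemma tildeN2fun_smul (hs : 0 < s) (f : Euc d → ℂ) :
    tildeN2fun d p (s • f) = s ^ (p - 1) * (l2norm d f ^ (p + 1 - d * (p - 1) / 2) *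
      √(gradSq d f - 2 / (p + 1) * s ^ (p - 1) * ppow d (p + 1) f) ^ (d * (p - 1) / 2 - 2)) := by
  rw [tildeN2fun, l2norm_smul hs.le, Hfun_smul hs, sqrt_mul (sq_nonneg s), sqrt_sq hs.le,
    mul_rpow hs.le (l2norm_nonneg f), mul_rpow hs.le (sqrt_nonneg _),
    mul_mul_mul_comm, ← rpow_add hs]
  ring_nf

end Scaling

lemma sub_one_pos_of_four_lt {p : ℝ} (hdp : 4 < d * (p - 1)) : 0 < p - 1 := by
  by_contra! h
  nlinarith [(Nat.cast_nonneg d : (0 : ℝ) ≤ d)]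

lemma N2fun_nonneg (f : Euc d → ℂ) (p : ℝ) : 0 ≤ N2fun d p f :=
  mul_nonneg (rpow_nonneg (l2norm_nonneg f) _) (rpow_nonneg (sqrt_nonneg _) _)

lemma tildeN2fun_eq_of_Kfun_eq_zero {f : Euc d → ℂ} {p : ℝ} (hdp : 4 < d * (p - 1))
    (hK : Kfun d p f = 0) :
    tildeN2fun d p f = √((d * (p - 1) - 4) / (d * (p - 1))) ^ (d * (p - 1) / 2 - 2) *
      N2fun d p f := by
  have hp := sub_one_pos_of_four_lt hdp
  have hd0 : (d : ℝ) ≠ 0 := by rintro h; norm_num [h] at hdp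
  have hp1 : p + 1 ≠ 0 := by linarith
  have hH : Hfun d p f = (d * (p - 1) - 4) / (d * (p - 1)) * gradSq d f := by
    have hP : ppow d (p + 1) f = 2 * (p + 1) / (d * (p - 1)) * gradSq d f := by
      rw [Kfun, sub_eq_zero] at hK
      rw [hK]
      field_simp
    rw [Hfun, hP]
    field_simp
    ring
  rw [tildeN2fun, hH, sqrt_mul' _ (gradSq_nonneg f), mul_rpow (sqrt_nonneg _) (sqrt_nonneg _),
    N2fun]
  ring

lemma tildeN2val_le_of_Kfun_eq_zero {f : Euc d → ℂ} {p : ℝ} (hdp : 4 < d * (p - 1))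
    (hf : Adm d p f) (hK : Kfun d p f = 0) : tildeN2val d p ≤ tildeN2fun d p f := by
  rw [tildeN2fun_eq_of_Kfun_eq_zero hdp hK, tildeN2val]
  gcongr
  exact csInf_le ⟨0, by rintro _ ⟨g, -, -, rfl⟩; exact N2fun_nonneg g p⟩
    ⟨f, hf, hK.le, rfl⟩

theorem HasCompactSupport.exists_fderiv_ne_zero {E F : Type*} [NormedAddCommGroup E]
    [NormedSpace ℝ E] [Nontrivial E] [NormedAddCommGroup F] [NormedSpace ℝ F] {g : E → F}
    (hg : Differentiable ℝ g) (hcs : HasCompactSupport g) (hne : g ≠ 0) :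
    ∃ x, fderiv ℝ g x ≠ 0 := by
  by_contra! h
  obtain ⟨y, hy⟩ : ∃ y, y ∉ tsupport g := by
    simpa [Set.eq_univ_iff_forall] using hcs.isCompact.ne_univ
  exact hne (funext fun x => (is_const_of_fderiv_eq_zero hg h x y).trans
    (image_eq_zero_of_notMem_tsupport hy))

lemma continuous_norm_fderiv_sq {g : Euc d → ℂ} (hg : ContDiff ℝ 1 g) :
    Continuous fun x => ‖fderiv ℝ g x‖ ^ 2 :=
  (hg.continuous_fderiv one_ne_zero).norm.pow 2

lemma hasCompactSupport_norm_fderiv_sq {g : Euc d → ℂ} (hcs : HasCompactSupport g) :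
    HasCompactSupport fun x => ‖fderiv ℝ g x‖ ^ 2 :=
  (hcs.fderiv ℝ).comp_left (g := fun D => ‖D‖ ^ 2) (by simp)

structure IsTestProfile (g : Euc d → ℂ) : Prop where
  contDiff : ContDiff ℝ 1 g
  hasCompactSupport : HasCompactSupport g
  ne_zero : g ≠ 0

namespace IsTestProfile

variable {g : Euc d → ℂ}

lemma smul (hg : IsTestProfile g) {s : ℝ} (hs : s ≠ 0) : IsTestProfile (s • g) :=
  ⟨hg.contDiff.const_smul s, hg.hasCompactSupport.comp_left (g := fun z => s • z) (smul_zero s),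
    smul_ne_zero hs hg.ne_zero⟩

lemma dilate (hg : IsTestProfile g) (p : ℝ) {l : ℝ} (hl : 0 < l) :
    IsTestProfile (dilate p l g) := by
  set c := l ^ (2 / (p - 1))
  refine ⟨(hg.contDiff.comp (contDiff_const_smul l)).const_smul c,
    (hg.hasCompactSupport.comp_smul hl.ne').comp_left (g := fun z => c • z) (smul_zero c),
    smul_ne_zero (rpow_pos_of_pos hl _).ne' fun h => hg.ne_zero (funext fun x => ?_)⟩
  simpa [smul_smul, hl.ne'] using congrFun h (l⁻¹ • x)

lemma adm (hg : IsTestProfile g) (p : ℝ) : Adm d p g := by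
  obtain ⟨hg, hcs, hne⟩ := hg
  have hint : Integrable (fun x => ‖fderiv ℝ g x‖ ^ 2) :=
    (continuous_norm_fderiv_sq hg).integrable_of_hasCompactSupport
      (hasCompactSupport_norm_fderiv_sq hcs)
  have hnz : ¬ g =ᵐ[volume] 0 := fun h =>
    hne ((Continuous.ae_eq_iff_eq volume hg.continuous continuous_const).1 h)
  exact ⟨⟨hg.continuous.memLp_of_hasCompactSupport hcs, hg.differentiable one_ne_zero, hint⟩,
    hg.continuous.memLp_of_hasCompactSupport hcs, hnz⟩

lemma ppow_pos (hg : IsTestProfile g) {q : ℝ} (hq : 0 < q) : 0 < ppow d q g := by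
  obtain ⟨hg, hcs, hne⟩ := hg
  obtain ⟨x, hx⟩ := Function.ne_iff.1 hne
  have hcont : Continuous fun x => ‖g x‖ ^ q := hg.continuous.norm.rpow_const fun _ => Or.inr hq.le
  exact hcont.integral_pos_of_hasCompactSupport_nonneg_nonzero
    (hcs.comp_left (g := fun z => ‖z‖ ^ q) (by simp [zero_rpow hq.ne'])) (fun _ => by positivity)
    (rpow_pos_of_pos (norm_pos_iff.2 hx) q).ne'

lemma gradSq_pos (hg : IsTestProfile g) (hd : d ≠ 0) : 0 < gradSq d g := by
  obtain ⟨hg, hcs, hne⟩ := hg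
  have : Nontrivial (Euc d) :=
    Module.nontrivial_of_finrank_pos (R := ℝ) (by simp [Nat.pos_of_ne_zero hd])
  obtain ⟨x, hx⟩ := hcs.exists_fderiv_ne_zero (hg.differentiable one_ne_zero) hne
  exact (continuous_norm_fderiv_sq hg).integral_pos_of_hasCompactSupport_nonneg_nonzero
    (hasCompactSupport_norm_fderiv_sq hcs) (fun _ => by positivity)
    (pow_ne_zero 2 (norm_ne_zero_iff.2 hx))

end IsTestProfile

lemma exists_isTestProfile (d : ℕ) : ∃ g : Euc d → ℂ, IsTestProfile g := by
  let φ : ContDiffBump (0 : Euc d) := default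
  refine ⟨fun x => (φ x : ℂ), Complex.ofRealCLM.contDiff.comp φ.contDiff,
    φ.hasCompactSupport.comp_left Complex.ofReal_zero, Function.ne_iff.2 ⟨0, ?_⟩⟩
  simp [φ.one_of_mem_closedBall (Metric.mem_closedBall_self φ.rIn_pos.le)]

lemma exists_smul_Kfun_pos_tildeN2fun_eq {g : Euc d → ℂ} {p η : ℝ} (hdp : 4 < d * (p - 1))
    (hg : IsTestProfile g) (hη : 0 < η) (hηlt : η < tildeN2val d p) :
    ∃ s : ℝ, 0 < s ∧ 0 < Kfun d p (s • g) ∧ tildeN2fun d p (s • g) = η := by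
  have hp := sub_one_pos_of_four_lt hdp
  have hd : d ≠ 0 := by rintro rfl; norm_num at hdp
  have hp1 : 0 < p + 1 := by linarith
  set G := gradSq d g with hGdef
  set P := ppow d (p + 1) g with hPdef
  set cK : ℝ := d * (p - 1) / (2 * (p + 1)) with hcKdef
  have hG : 0 < G := hg.gradSq_pos hd
  have hP : 0 < P := hg.ppow_pos (by linarith)
  have hcK : 0 < cK := by positivity
  set T : ℝ → ℝ := fun s => s ^ (p - 1) * (l2norm d g ^ (p + 1 - d * (p - 1) / 2) *
    √(G - 2 / (p + 1) * s ^ (p - 1) * P) ^ (d * (p - 1) / 2 - 2))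
  have hT : Continuous T := by
    have hB : 0 ≤ (d : ℝ) * (p - 1) / 2 - 2 := by linarith
    have hpow : Continuous fun s : ℝ => s ^ (p - 1) :=
      continuous_id.rpow_const fun _ => Or.inr hp.le
    exact hpow.mul (continuous_const.mul
      ((continuous_const.sub ((continuous_const.mul hpow).mul continuous_const)).sqrt.rpow_const
        fun _ => Or.inr hB))
  have hT0 : T 0 = 0 := by simp [T, zero_rpow hp.ne']
  -- `s ↦ s • g` crosses `𝒦 = 0` at `s₁`
  set s₁ := (G / (cK * P)) ^ (p - 1)⁻¹
  have hs₁ : 0 < s₁ := by positivity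
  have hs₁p : s₁ ^ (p - 1) = G / (cK * P) := rpow_inv_rpow (by positivity) hp.ne'
  have hK : ∀ s > 0, Kfun d p (s • g) = s ^ 2 * (cK * P) * (s₁ ^ (p - 1) - s ^ (p - 1)) := by
    intro s hs
    rw [Kfun_smul hs, hs₁p, ← hGdef, ← hPdef, ← hcKdef]
    field_simp
  have hT₁ : tildeN2val d p ≤ T s₁ :=
    calc tildeN2val d p ≤ tildeN2fun d p (s₁ • g) :=
          tildeN2val_le_of_Kfun_eq_zero hdp ((hg.smul hs₁.ne').adm p)
            (by rw [hK s₁ hs₁, sub_self, mul_zero])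
      _ = T s₁ := tildeN2fun_smul hs₁ g
  obtain ⟨s, ⟨hs0, hs1⟩, hTs⟩ :=
    intermediate_value_Icc hs₁.le hT.continuousOn
      ⟨by rw [hT0]; exact hη.le, (hηlt.trans_le hT₁).le⟩
  have hs : 0 < s := hs0.lt_of_ne (by rintro rfl; rw [hT0] at hTs; exact hη.ne hTs)
  have hss₁ : s < s₁ := hs1.lt_of_ne (by rintro rfl; linarith)
  refine ⟨s, hs, ?_, (tildeN2fun_smul hs g).trans hTs⟩
  rw [hK s hs]
  exact mul_pos (by positivity) (sub_pos.2 (rpow_lt_rpow hs.le hss₁ hp))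

lemma exists_l2norm_dilate_eq {f : Euc d → ℂ} {p α : ℝ} (hdp : 4 < d * (p - 1))
    (hf : 0 < l2norm d f) (hα : 0 < α) : ∃ l > 0, l2norm d (dilate p l f) = α := by
  have hp := sub_one_pos_of_four_lt hdp
  have ha : 2 / (p - 1) - d / 2 ≠ 0 := by
    rw [sub_ne_zero, Ne, div_eq_div_iff hp.ne' two_ne_zero]
    linarith
  refine ⟨(α / l2norm d f) ^ (2 / (p - 1) - d / 2)⁻¹, by positivity, ?_⟩
  rw [l2norm_dilate (by positivity), rpow_inv_rpow (by positivity) ha]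
  field_simp

theorem PWplus_foliation_general (d : ℕ) (p : ℝ) (hd : 1 ≤ d)
    (hp1 : 2 + 4 / (d : ℝ) < p + 1) :
    ∀ η : ℝ, 0 < η → η < tildeN2val d p → ∀ α : ℝ, 0 < α →
      ∃ f : Euc d → ℂ, f ∈ PWplusT d p ∧ tildeN2fun d p f = η ∧ l2norm d f = α := by
  intro η hη hηlt α hα
  have hdp : 4 < d * (p - 1) := by
    have hd0 : (0 : ℝ) < d := by exact_mod_cast hd
    rw [← div_lt_iff₀' hd0]
    linarith
  have hp : p ≠ 1 := (sub_pos.1 (sub_one_pos_of_four_lt hdp)).ne'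
  obtain ⟨g, hg⟩ := exists_isTestProfile d
  obtain ⟨s, hs, hK, hN⟩ := exists_smul_Kfun_pos_tildeN2fun_eq hdp hg hη hηlt
  have hsg := hg.smul hs.ne'
  obtain ⟨l, hl, hL⟩ := exists_l2norm_dilate_eq hdp (sqrt_pos.2 (hsg.ppow_pos two_pos)) hα
  have hN' : tildeN2fun d p (dilate p l (s • g)) = η := (tildeN2fun_dilate hp hl _).trans hN
  refine ⟨dilate p l (s • g), ⟨(hsg.dilate p hl).adm p, ?_, hN' ▸ hηlt⟩, hN', hL⟩
  rw [Kfun_dilate hp hl]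
  exact mul_pos (rpow_pos_of_pos hl _) hK

/-- foliation of `PW₊`: for every `η ∈ (0, Ñ₂)` and every `α > 0` there
exists `f ∈ PW₊` with `Ñ₂(f) = η` and `‖f‖_{L²} = α`. -/
theorem PWplus_foliation (d : ℕ) (p : ℝ) (hd : 1 ≤ d)
    (hp1 : 2 + 4 / (d : ℝ) < p + 1)
    (hp2 : 3 ≤ d → p + 1 < 2 * (d : ℝ) / ((d : ℝ) - 2)) :
    ∀ η : ℝ, 0 < η → η < tildeN2val d p → ∀ α : ℝ, 0 < α →
      ∃ f : Euc d → ℂ, f ∈ PWplusT d p ∧ tildeN2fun d p f = η ∧ l2norm d f = α :=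
  PWplus_foliation_general d p hd hp1
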